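/- arXiv:0905.1624 — 6 statements merged into one kernel-verified Lean document; each statement's English description precedes it below -/
import Mathlib

section
/- Let G be a group and let X be a finite subset of G that is closed under conjugation by elements of G, such that every element of X has finite order. Then the subgroup generated by X is finite. -/
/-! Since the elements of `X` have finite order, the subgroup generated by `X` is the submonoid
generated by `X`, i.e. the set of products of words over `X`. Closure under conjugation lets one
gather all occurrences of a letter `x` at the front of a word, at the cost of conjugating the
other letters, and then delete `x ^ orderOf x`. Hence every element is the product of a word of
length at most `∑ x ∈ X, (orderOf x - 1)`, and there are finitely many such words. -/

theorem Set.Finite.setOf_list_length_le {α : Type*} {s : Set α} (hs : s.Finite) (n : ℕ) :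
    {l : List α | (∀ a ∈ l, a ∈ s) ∧ l.length ≤ n}.Finite := by
  have := hs.to_subtype
  refine ((List.finite_length_le s n).image (List.map (↑))).subset ?_
  rintro l ⟨hl, hlen⟩
  obtain ⟨l', rfl⟩ : l ∈ Set.range (List.map ((↑) : s → α)) := by
    rwa [Set.range_list_map_coe]
  exact ⟨l', by simpa using hlen, rfl⟩

theorem List.exists_lt_count_of_sum_lt_length {α : Type*} [DecidableEq α] {s : Finset α}
    {l : List α} (hl : ∀ a ∈ l, a ∈ s) (f : α → ℕ) (h : ∑ x ∈ s, f x < l.length) :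
    ∃ x ∈ s, f x < l.count x := by
  by_contra! hle
  have : l.length ≤ ∑ x ∈ s, f x := by
    rw [← Multiset.coe_card, ← Multiset.sum_count_eq_card (m := (l : Multiset α)) hl]
    exact Finset.sum_le_sum fun x hx => by simpa using hle x hx
  omega

section
variable {G : Type*} [Group G] [DecidableEq G] {X : Set G}

theorem exists_prod_eq_pow_count_mul_prod (hconj : ∀ g : G, ∀ x ∈ X, g⁻¹ * x * g ∈ X) (x : G)
    {l : List G} (hl : ∀ a ∈ l, a ∈ X) :
    ∃ l' : List G, (∀ a ∈ l', a ∈ X) ∧ l'.length + l.count x = l.length ∧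
      l.prod = x ^ l.count x * l'.prod := by
  induction l with
  | nil => exact ⟨[], by simp, by simp, by simp⟩
  | cons a t ih =>
    obtain ⟨l', hl', hlen, hprod⟩ := ih fun b hb => hl b (List.mem_cons_of_mem _ hb)
    by_cases hax : a = x
    · subst hax
      refine ⟨l', hl', ?_, ?_⟩
      · simp only [List.count_cons_self, List.length_cons]
        omega
      · rw [List.prod_cons, hprod, List.count_cons_self, pow_succ', mul_assoc]
    · -- `a` is moved past `x ^ count x t`, which conjugates it
      refine ⟨((x ^ t.count x)⁻¹ * a * x ^ t.count x) :: l', ?_, ?_, ?_⟩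
      · simpa using ⟨hconj _ a (hl a List.mem_cons_self), hl'⟩
      · simp only [List.length_cons, List.count_cons_of_ne hax]
        omega
      · rw [List.prod_cons, hprod, List.prod_cons, List.count_cons_of_ne hax]
        group

theorem exists_shorter_list_prod_eq (hconj : ∀ g : G, ∀ x ∈ X, g⁻¹ * x * g ∈ X) {x : G}
    (hxX : x ∈ X) (hx : IsOfFinOrder x) {l : List G} (hl : ∀ a ∈ l, a ∈ X)
    (hcount : orderOf x ≤ l.count x) :
    ∃ l' : List G, (∀ a ∈ l', a ∈ X) ∧ l'.length < l.length ∧ l'.prod = l.prod := by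
  obtain ⟨l', hl', hlen, hprod⟩ := exists_prod_eq_pow_count_mul_prod hconj x hl
  have hpos := hx.orderOf_pos
  refine ⟨List.replicate (l.count x % orderOf x) x ++ l', ?_, ?_, ?_⟩
  · intro a ha
    rcases List.mem_append.1 ha with ha | ha
    · rwa [List.eq_of_mem_replicate ha]
    · exact hl' a ha
  · have := Nat.mod_lt (l.count x) hpos
    simp only [List.length_append, List.length_replicate]
    omega
  · rw [List.prod_append, List.prod_replicate, pow_mod_orderOf, hprod]

theorem exists_list_length_le_sum_orderOf_prod_eq (hfin : X.Finite)
    (hconj : ∀ g : G, ∀ x ∈ X, g⁻¹ * x * g ∈ X) (hord : ∀ x ∈ X, IsOfFinOrder x)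
    (l : List G) (hl : ∀ a ∈ l, a ∈ X) :
    ∃ l' : List G, (∀ a ∈ l', a ∈ X) ∧ l'.length ≤ ∑ x ∈ hfin.toFinset, (orderOf x - 1) ∧
      l'.prod = l.prod := by
  by_cases hshort : l.length ≤ ∑ x ∈ hfin.toFinset, (orderOf x - 1)
  · exact ⟨l, hl, hshort, rfl⟩
  obtain ⟨x, hxX, hx⟩ := List.exists_lt_count_of_sum_lt_length
    (fun a ha => hfin.mem_toFinset.2 (hl a ha)) _ (not_le.1 hshort)
  rw [hfin.mem_toFinset] at hxX
  obtain ⟨m, hm, hlen, hprod⟩ :=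
    exists_shorter_list_prod_eq hconj hxX (hord x hxX) hl (by omega)
  obtain ⟨l', hl', hlen', hprod'⟩ :=
    exists_list_length_le_sum_orderOf_prod_eq hfin hconj hord m hm
  exact ⟨l', hl', hlen', hprod'.trans hprod⟩
termination_by l.length

end

/-- Dicman's lemma: a finite conjugation-closed set of torsion elements
generates a finite subgroup. -/
theorem dicman {G : Type*} [Group G] (X : Set G) (hfin : X.Finite)
    (hconj : ∀ g : G, ∀ x ∈ X, g⁻¹ * x * g ∈ X)
    (hord : ∀ x ∈ X, IsOfFinOrder x) :
    ((Subgroup.closure X : Subgroup G) : Set G).Finite := by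
  classical
  rw [← Subgroup.coe_toSubmonoid, Subgroup.closure_toSubmonoid_of_isOfFinOrder hord]
  refine ((hfin.setOf_list_length_le (∑ x ∈ hfin.toFinset, (orderOf x - 1))).image
    List.prod).subset ?_
  intro g hg
  obtain ⟨l, hl, rfl⟩ := Submonoid.exists_list_of_mem_closure hg
  obtain ⟨l', hl', hlen, hprod⟩ := exists_list_length_le_sum_orderOf_prod_eq hfin hconj hord l hl
  exact ⟨l', ⟨hl', hlen⟩, hprod⟩
end

section
/- Let G be a group and x ∈ G. Then x lies in some finite normal subgroup of G if and only if x has finite order and the centralizer of x in G has finite index in G. -/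
def ResiduallyFinite (G : Type*) [Group G] : Prop :=
  sInf {N : Subgroup G | N.Normal ∧ N.FiniteIndex} = ⊥

def JustInfinite (G : Type*) [Group G] : Prop :=
  Infinite G ∧ ResiduallyFinite G ∧
    ∀ N : Subgroup G, N.Normal → N ≠ ⊥ → N.FiniteIndex

def FinRadical (G : Type*) [Group G] : Set G :=
  { x | ∃ N : Subgroup G, N.Normal ∧ (N : Set G).Finite ∧ x ∈ N }

def VirtuallyAbelian (G : Type*) [Group G] : Prop :=
  ∃ H : Subgroup G, H.FiniteIndex ∧ ∀ a b : H, a * b = b * a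

def conjugatesSet (G : Type*) [Group G] (B : Subgroup G) : Set (Subgroup G) :=
  { C | ∃ g : G, B.map (MulAut.conj g).toMonoidHom = C }

def IsBasal (G : Type*) [Group G] (B : Subgroup G) : Prop :=
  B ≠ ⊥ ∧ (conjugatesSet G B).Finite ∧
  (∀ C ∈ conjugatesSet G B, ∀ D ∈ conjugatesSet G B, C ≠ D →
      C ⊓ D = ⊥ ∧ ∀ x ∈ C, ∀ y ∈ D, Commute x y) ∧
  iSupIndep (fun C : conjugatesSet G B => (C : Subgroup G)) ∧
  (⨆ C ∈ conjugatesSet G B, C) = Subgroup.normalClosure (B : Set G)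


/-! If `x` lies in a finite normal subgroup, its conjugacy class lies there too, and the class
has `[G : C_G(x)]` elements. Conversely, if `x` is torsion with finitely many conjugates, its normal
closure `N` is generated by finitely many torsion elements whose common centralizer has finite index
in `G`, so `Z(N)` has finite index in `N`. Schur's theorem makes `[N, N]` finite, and `N / [N, N]` is
a finitely generated abelian group generated by torsion elements, hence finite (Dietzmann's lemma). -/

open Subgroup
open scoped commutatorElement

section

variable {G : Type*} [Group G]

theorem Subgroup.index_centralizer_singleton (x : G) :
    (centralizer {x}).index = (conjugatesOf x).ncard := by
  rw [centralizer_eq_comap_stabilizer]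
  refine (index_comap_of_surjective _ ConjAct.toConjAct.surjective).trans ?_
  rw [MulAction.index_stabilizer]
  congr 1
  ext y
  exact ConjAct.mem_orbit_conjAct.trans isConj_comm

theorem Subgroup.finiteIndex_centralizer_singleton_iff {x : G} :
    (centralizer {x}).FiniteIndex ↔ (conjugatesOf x).Finite := by
  rw [finiteIndex_iff, index_centralizer_singleton]
  exact ⟨Set.finite_of_ncard_ne_zero, fun h => Set.ncard_ne_zero_of_mem mem_conjugatesOf_self h⟩

theorem commutatorElement_mul_mem_center_left {z : G} (hz : z ∈ center G) (a b : G) :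
    ⁅a * z, b⁆ = ⁅a, b⁆ := by
  rw [commutatorElement_def, commutatorElement_def, mul_assoc a z b, ← mem_center_iff.mp hz b]
  group

theorem commutatorElement_mul_mem_center_right {z : G} (hz : z ∈ center G) (a b : G) :
    ⁅a, b * z⁆ = ⁅a, b⁆ := by
  rw [← inv_inj, commutatorElement_inv, commutatorElement_inv,
    commutatorElement_mul_mem_center_left hz]

theorem finite_commutatorSet_of_finiteIndex_center [(center G).FiniteIndex] :
    Finite (commutatorSet G) := by
  refine Set.Finite.to_subtype ((Set.finite_range fun p : (G ⧸ center G) × (G ⧸ center G) =>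
    ⁅p.1.out, p.2.out⁆).subset ?_)
  rintro _ ⟨a, b, rfl⟩
  obtain ⟨z, hz⟩ := QuotientGroup.mk_out_eq_mul (center G) a
  obtain ⟨w, hw⟩ := QuotientGroup.mk_out_eq_mul (center G) b
  refine ⟨((a : G ⧸ center G), (b : G ⧸ center G)), ?_⟩
  simp only [hz, hw, commutatorElement_mul_mem_center_left z.2,
    commutatorElement_mul_mem_center_right w.2]

theorem isMulTorsion_abelianization_of_closure_eq_top {S : Set G} (hS : closure S = ⊤)
    (hS_tors : ∀ s ∈ S, IsOfFinOrder s) : IsMulTorsion (Abelianization G) := by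
  have h_le : (closure S).map Abelianization.of ≤ CommGroup.torsion (Abelianization G) := by
    rw [MonoidHom.map_closure, closure_le]
    rintro _ ⟨s, hs, rfl⟩
    exact Abelianization.of.isOfFinOrder (hS_tors s hs)
  intro a
  induction a using QuotientGroup.induction_on with
  | H g => exact h_le ⟨g, hS ▸ mem_top g, rfl⟩

theorem Group.finite_of_finiteIndex_center_of_closure_eq_top [Group.FG G] [(center G).FiniteIndex]
    {S : Set G} (hS : closure S = ⊤) (hS_tors : ∀ s ∈ S, IsOfFinOrder s) : Finite G := by
  have := finite_commutatorSet_of_finiteIndex_center (G := G)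
  have : Group.FG (Abelianization G) := QuotientGroup.fg _
  have : Finite (G ⧸ commutator G) := CommGroup.finite_of_fg_isMulTorsion (Abelianization G)
    (isMulTorsion_abelianization_of_closure_eq_top hS hS_tors)
  exact Finite.of_subgroup_quotient (commutator G)

theorem Subgroup.finite_closure_of_conj_mem {S : Set G} (hS_fin : S.Finite)
    (hS_conj : ∀ g, ∀ s ∈ S, g * s * g⁻¹ ∈ S) (hS_tors : ∀ s ∈ S, IsOfFinOrder s) :
    (closure S : Set G).Finite := by
  set N := closure S
  have hN : closure (((↑) : N → G) ⁻¹' S) = ⊤ := closure_closure_coe_preimage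
  have : Group.FG N := Group.fg_iff.mpr ⟨_, hN, hS_fin.preimage Subtype.val_injective.injOn⟩
  have : (centralizer S).FiniteIndex := by
    rw [centralizer_eq_iInf, ← hS_fin.coe_toFinset]
    refine finiteIndex_iInf' _ fun s hs => finiteIndex_centralizer_singleton_iff.mpr ?_
    refine hS_fin.subset fun t hst => ?_
    obtain ⟨g, rfl⟩ := isConj_iff.mp hst
    exact hS_conj g s (hS_fin.mem_toFinset.mp hs)
  have : (center N).FiniteIndex := by
    refine finiteIndex_of_le (H := (centralizer S).subgroupOf N) fun n hn => ?_
    rw [mem_subgroupOf, ← centralizer_closure] at hn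
    exact mem_center_iff.mpr fun m => Subtype.ext (mem_centralizer_iff.mp hn m m.2)
  exact Set.finite_coe_iff.mp (Group.finite_of_finiteIndex_center_of_closure_eq_top hN
    fun s hs => Submonoid.isOfFinOrder_coe.mp (hS_tors s hs))

end

/-- An element lies in some finite normal subgroup iff it has finite order
and its centralizer has finite index. -/
theorem mem_finRadical_iff {G : Type*} [Group G] (x : G) :
    x ∈ FinRadical G ↔
      IsOfFinOrder x ∧ (Subgroup.centralizer {x}).FiniteIndex := by
  rw [finiteIndex_centralizer_singleton_iff]
  constructor
  · rintro ⟨N, hN, hN_fin, hx⟩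
    have : Finite N := hN_fin.to_subtype
    exact ⟨N.subtype.isOfFinOrder (isOfFinOrder_of_finite (⟨x, hx⟩ : N)),
      hN_fin.subset (Group.conjugates_subset_normal hx)⟩
  · rintro ⟨hx, hx_conj⟩
    have h_conj : Group.conjugatesOfSet {x} = conjugatesOf x := Set.biUnion_singleton _ _
    refine ⟨normalClosure {x}, normalClosure_normal, ?_, subset_normalClosure rfl⟩
    refine finite_closure_of_conj_mem (h_conj ▸ hx_conj)
      (fun g s hs => Group.conj_mem_conjugatesOfSet hs) fun s hs => ?_
    obtain ⟨_, rfl, hxs⟩ := Group.mem_conjugatesOfSet_iff.mp hs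
    exact hxs.isOfFinOrder hx
end

section
/- Let G be a residually finite group with trivial finite radical, and let H be a finite-index subgroup of G. If H is just infinite, then G is just infinite. -/
/-!
A nontrivial normal subgroup `N` of `G` either meets `H` trivially, and then embeds in the finite
set `G ⧸ H`, so lies in `Fin(G) = 1`; or `N ⊓ H` is a nontrivial normal subgroup of the just
infinite group `H`, hence of finite index in `H` and therefore in `G`.
-/

namespace Subgroup

variable {G : Type*} [Group G]

theorem finite_of_disjoint_of_finiteIndex {N H : Subgroup G} (hNH : Disjoint N H)
    [H.FiniteIndex] : Finite N := by
  have hbot : H.subgroupOf N = ⊥ := subgroupOf_eq_bot.mpr hNH.symm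
  have hcard : Nat.card N ≠ 0 := by
    rw [← index_bot, ← hbot]
    exact FiniteIndex.index_ne_zero
  exact Nat.finite_of_card_ne_zero hcard

theorem finiteIndex_of_finiteIndex_subgroupOf {N H : Subgroup G} [H.FiniteIndex]
    [(N.subgroupOf H).FiniteIndex] : N.FiniteIndex := by
  rw [finiteIndex_iff, ← relIndex_top_right]
  exact relIndex_ne_zero_trans (K := H) FiniteIndex.index_ne_zero
    (by rwa [relIndex_top_right, ← finiteIndex_iff])

theorem eq_bot_of_finite_of_finRadical_eq_one
    (hfr : FinRadical G = {1}) {N : Subgroup G} (hN : N.Normal) [Finite N] : N = ⊥ := by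
  rw [eq_bot_iff]
  intro x hx
  have hxrad : x ∈ FinRadical G := ⟨N, hN, Set.toFinite _, hx⟩
  rwa [hfr] at hxrad

end Subgroup

/-- If G is residually finite with trivial finite radical and has a just
infinite subgroup of finite index, then G is just infinite. -/
theorem justInfinite_of_finiteIndex_justInfinite {G : Type*} [Group G]
    (hrf : ResiduallyFinite G) (hfr : FinRadical G = {1})
    (H : Subgroup G) (hH : H.FiniteIndex) (hji : JustInfinite H) :
    JustInfinite G := by
  obtain ⟨hHinf, -, hHnormal⟩ := hji
  refine ⟨Infinite.of_injective (Subtype.val : H → G) Subtype.val_injective, hrf,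
    fun N hN hNbot => ?_⟩
  by_cases hNH : Disjoint N H
  · have := Subgroup.finite_of_disjoint_of_finiteIndex hNH
    exact absurd (Subgroup.eq_bot_of_finite_of_finRadical_eq_one hfr hN) hNbot
  · have : (N.subgroupOf H).FiniteIndex :=
      hHnormal _ (hN.subgroupOf H) (by rwa [Ne, Subgroup.subgroupOf_eq_bot])
    exact Subgroup.finiteIndex_of_finiteIndex_subgroupOf (H := H)
end

section
/- Let G be a just infinite group that is not virtually abelian, and let K be a nontrivial subgroup of G that is normal in its normal closure K^G. Then K has only finitely many conjugates in G, and some intersection of conjugates of K is a basal subgroup of G. -/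
/-!
Let `N = K^G`. It normalizes `K` and has finite index, so `K` has finitely many conjugates, and
the intersections of nonempty families of them form a finite set closed under `⊓` and
conjugation, all of whose members are normalized by `N`. A minimal nontrivial such intersection
`B` meets each of its distinct conjugates trivially, and two distinct conjugates of `B`, being
normalized by `N ⊇ B^G`, then commute.

If a conjugate `C` of `B` met the join of the other conjugates nontrivially, the intersection
would be a nontrivial abelian subgroup `M ≤ N` normalized by `N`. The same construction applied
to `M` yields abelian conjugates that pairwise commute, so their join is a nontrivial abelian
normal subgroup, of finite index since `G` is just infinite: `G` would be virtually abelian.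
-/

open Pointwise MulAction ConjAct Subgroup

lemma conjugatesSet_eq_orbit {G : Type*} [Group G] (B : Subgroup G) :
    conjugatesSet G B = orbit (ConjAct G) B := by
  ext C
  exact ⟨fun ⟨g, hg⟩ => ⟨toConjAct g, hg⟩, fun ⟨c, hc⟩ => ⟨ofConjAct c, hc⟩⟩

namespace Subgroup

variable {G : Type*} [Group G]

lemma le_normalizer_of_mem_orbit {N B C : Subgroup G} [N.Normal] (h : N ≤ normalizer B)
    (hC : C ∈ orbit (ConjAct G) B) : N ≤ normalizer C := by
  obtain ⟨c, rfl⟩ := hC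
  intro n hn
  rw [← conjAct_pointwise_smul_iff]
  have hmem : ofConjAct c⁻¹ * n * ofConjAct c ∈ N := by
    simpa using Normal.conj_mem ‹_› n hn (ofConjAct c⁻¹)
  calc toConjAct n • c • B = c • toConjAct (ofConjAct c⁻¹ * n * ofConjAct c) • B := by
        simp [smul_smul, mul_assoc]
    _ = c • B := by rw [conjAct_pointwise_smul_eq_self (h hmem)]

lemma le_of_mem_orbit {N B C : Subgroup G} [N.Normal] (h : B ≤ N)
    (hC : C ∈ orbit (ConjAct G) B) : C ≤ N := by
  obtain ⟨c, rfl⟩ := hC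
  exact (pointwise_smul_le_pointwise_smul_iff.mpr h).trans (Normal.conjAct ‹_› c).le

lemma finite_orbit_of_le_normalizer {N H : Subgroup G} [N.FiniteIndex] (h : N ≤ normalizer H) :
    (orbit (ConjAct G) H).Finite := by
  have : (stabilizer (ConjAct G) H).index ≠ 0 := by
    rw [← index_comap_of_surjective (stabilizer (ConjAct G) H) (f := toConjAct.toMonoidHom)
      toConjAct.surjective]
    convert (finiteIndex_of_le h).index_ne_zero
    ext g
    exact conjAct_pointwise_smul_iff
  exact Set.finite_of_ncard_ne_zero (index_stabilizer (ConjAct G) H ▸ this)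

lemma le_normalizer_sInf {N : Subgroup G} {T : Set (Subgroup G)}
    (h : ∀ C ∈ T, N ≤ normalizer C) : N ≤ normalizer (sInf T : Subgroup G) := by
  intro n hn
  rw [mem_normalizer_iff]
  intro x
  simp only [mem_sInf]
  exact forall₂_congr fun C hC => mem_normalizer_iff.mp (h C hC hn) x

lemma le_normalizer_iSup {ι : Sort*} {N : Subgroup G} {H : ι → Subgroup G}
    (h : ∀ i, N ≤ normalizer (H i)) : N ≤ normalizer (⨆ i, H i : Subgroup G) :=
  (le_iInf h).trans (iInf_normalizer_le_normalizer_iSup H)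

lemma le_centralizer_of_disjoint {C D : Subgroup G} (hCD : C ≤ normalizer D)
    (hDC : D ≤ normalizer C) (h : Disjoint C D) : C ≤ centralizer D := by
  intro x hx
  rw [mem_centralizer_iff]
  intro y hy
  have hC : x * (y * x⁻¹ * y⁻¹) ∈ C :=
    C.mul_mem hx ((mem_normalizer_iff.mp (hDC hy) x⁻¹).mp (C.inv_mem hx))
  have hD : x * y * x⁻¹ * y⁻¹ ∈ D :=
    D.mul_mem ((mem_normalizer_iff.mp (hCD hx) y).mp hy) (D.inv_mem hy)
  have : x * y * x⁻¹ * y⁻¹ ∈ C ⊓ D := ⟨by simpa [mul_assoc] using hC, hD⟩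
  rw [disjoint_iff.mp h, mem_bot] at this
  exact (commutatorElement_eq_one_iff_mul_comm.mp this).symm

lemma smul_le_centralizer {H : Subgroup G} (h : H ≤ centralizer H) (c : ConjAct G) :
    c • H ≤ centralizer (c • H : Subgroup G) := by
  intro x hx
  rw [mem_centralizer_iff]
  intro y hy
  rw [SetLike.mem_coe, mem_pointwise_smul_iff_inv_smul_mem] at hy
  rw [mem_pointwise_smul_iff_inv_smul_mem] at hx
  simpa [smul_mul'] using congrArg (c • ·) (mem_centralizer_iff.mp (h hx) _ hy)

lemma smul_sInf (c : ConjAct G) (T : Set (Subgroup G)) : c • sInf T = sInf ((c • ·) '' T) := by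
  ext x
  simp only [mem_pointwise_smul_iff_inv_smul_mem, mem_sInf, Set.forall_mem_image]

lemma smul_iSup {ι : Sort*} (c : ConjAct G) (H : ι → Subgroup G) :
    c • ⨆ i, H i = ⨆ i, c • H i :=
  map_iSup _ H

lemma le_iSup_smul (B : Subgroup G) : B ≤ ⨆ c : ConjAct G, c • B :=
  le_iSup_of_le 1 (one_smul _ B).ge

instance normal_iSup_smul (B : Subgroup G) : (⨆ c : ConjAct G, c • B).Normal := by
  refine ⟨fun x hx g => ?_⟩
  have := smul_mem_pointwise_smul x (toConjAct g) _ hx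
  have hperm : ⨆ d, (toConjAct g * d) • B = ⨆ d : ConjAct G, d • B :=
    (Equiv.mulLeft (toConjAct g)).iSup_comp (g := (· • B))
  simp_rw [smul_iSup, smul_smul] at this
  rwa [hperm, toConjAct_smul] at this

lemma iSup_smul_eq_normalClosure (B : Subgroup G) :
    ⨆ c : ConjAct G, c • B = normalClosure (B : Set G) :=
  le_antisymm (iSup_le fun c => le_of_mem_orbit le_normalClosure (mem_orbit B c))
    (normalClosure_le_normal (le_iSup_smul B))

lemma pairwise_disjoint_orbit_of_minimal {P : Set (Subgroup G)}
    (hinf : ∀ Y ∈ P, ∀ Z ∈ P, Y ⊓ Z ∈ P) (hsmul : ∀ c : ConjAct G, ∀ Y ∈ P, c • Y ∈ P)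
    {B : Subgroup G} (hB : Minimal (fun Y => Y ∈ P ∧ Y ≠ ⊥) B) :
    (orbit (ConjAct G) B).Pairwise Disjoint := by
  have key : ∀ c : ConjAct G, B ⊓ c • B ≠ ⊥ → B ≤ c • B := fun c hc =>
    (hB.eq_of_le ⟨hinf _ hB.1.1 _ (hsmul c _ hB.1.1), hc⟩ inf_le_left).ge.trans inf_le_right
  have hle : ∀ c d : ConjAct G, c • B ⊓ d • B ≠ ⊥ → c • B ≤ d • B := by
    intro c d h
    have hcd : c • (B ⊓ (c⁻¹ * d) • B) = c • B ⊓ d • B := by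
      rw [smul_inf, smul_smul, mul_inv_cancel_left]
    have := key (c⁻¹ * d) fun h0 => h (by rw [← hcd, h0, smul_bot])
    calc c • B ≤ c • (c⁻¹ * d) • B := pointwise_smul_le_pointwise_smul_iff.mpr this
      _ = d • B := by rw [smul_smul, mul_inv_cancel_left]
  rintro _ ⟨c, rfl⟩ _ ⟨d, rfl⟩ hcd
  rw [disjoint_iff]
  by_contra h
  exact hcd (le_antisymm (hle c d h) (hle d c (inf_comm (c • B) _ ▸ h)))

def conjugateInfs (X : Subgroup G) : Set (Subgroup G) :=
  sInf '' {T | T ⊆ orbit (ConjAct G) X ∧ T.Nonempty}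

lemma self_mem_conjugateInfs (X : Subgroup G) : X ∈ conjugateInfs X :=
  ⟨{X}, ⟨Set.singleton_subset_iff.mpr (mem_orbit_self X), Set.singleton_nonempty X⟩,
    sInf_singleton⟩

lemma inf_mem_conjugateInfs {X Y Z : Subgroup G} (hY : Y ∈ conjugateInfs X)
    (hZ : Z ∈ conjugateInfs X) : Y ⊓ Z ∈ conjugateInfs X := by
  obtain ⟨T, ⟨hT, hTne⟩, rfl⟩ := hY
  obtain ⟨U, ⟨hU, -⟩, rfl⟩ := hZ
  exact ⟨T ∪ U, ⟨Set.union_subset hT hU, hTne.inl⟩, sInf_union⟩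

lemma smul_mem_conjugateInfs {X Y : Subgroup G} (c : ConjAct G) (hY : Y ∈ conjugateInfs X) :
    c • Y ∈ conjugateInfs X := by
  obtain ⟨T, ⟨hT, hTne⟩, rfl⟩ := hY
  refine ⟨(c • ·) '' T, ⟨?_, hTne.image _⟩, (smul_sInf c T).symm⟩
  rintro _ ⟨C, hC, rfl⟩
  obtain ⟨d, rfl⟩ := hT hC
  exact ⟨c * d, mul_smul c d X⟩

lemma finite_conjugateInfs {X : Subgroup G} (h : (orbit (ConjAct G) X).Finite) :
    (conjugateInfs X).Finite :=
  (h.finite_subsets.subset fun _ hT => hT.1).image _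

lemma le_normalizer_of_mem_conjugateInfs {N X Y : Subgroup G} [N.Normal]
    (hN : N ≤ normalizer X) (hY : Y ∈ conjugateInfs X) : N ≤ normalizer Y := by
  obtain ⟨T, ⟨hT, -⟩, rfl⟩ := hY
  exact le_normalizer_sInf fun C hC => le_normalizer_of_mem_orbit hN (hT hC)

theorem exists_mem_conjugateInfs_pairwise_disjoint {X : Subgroup G}
    (hfin : (orbit (ConjAct G) X).Finite) (hX : X ≠ ⊥) :
    ∃ B ∈ conjugateInfs X, B ≤ X ∧ B ≠ ⊥ ∧ (orbit (ConjAct G) B).Pairwise Disjoint := by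
  have hfin' := (finite_conjugateInfs hfin).subset (Set.sep_subset _ (· ≠ ⊥))
  obtain ⟨B, hBX, hB⟩ := hfin'.exists_le_minimal (a := X) ⟨self_mem_conjugateInfs X, hX⟩
  exact ⟨B, hB.1.1, hBX, hB.1.2, pairwise_disjoint_orbit_of_minimal
    (fun _ hY _ hZ => inf_mem_conjugateInfs hY hZ) (fun c _ hY => smul_mem_conjugateInfs c hY) hB⟩

lemma pairwise_le_centralizer_orbit {N B : Subgroup G} [N.Normal] (hBN : B ≤ N)
    (hNB : N ≤ normalizer B) (h : (orbit (ConjAct G) B).Pairwise Disjoint) :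
    (orbit (ConjAct G) B).Pairwise fun C D => C ≤ centralizer D := fun _ hC _ hD hCD =>
  le_centralizer_of_disjoint ((le_of_mem_orbit hBN hC).trans (le_normalizer_of_mem_orbit hNB hD))
    ((le_of_mem_orbit hBN hD).trans (le_normalizer_of_mem_orbit hNB hC)) (h hC hD hCD)

lemma iSup_smul_le_centralizer {B : Subgroup G} (hB : B ≤ centralizer B)
    (h : (orbit (ConjAct G) B).Pairwise fun C D => C ≤ centralizer D) :
    ⨆ c : ConjAct G, c • B ≤ centralizer (⨆ c : ConjAct G, c • B : Subgroup G) := by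
  refine iSup_le fun c => le_centralizer_iff.mpr (iSup_le fun d => ?_)
  by_cases hcd : d • B = c • B
  · exact hcd ▸ smul_le_centralizer hB d
  · exact h (mem_orbit B d) (mem_orbit B c) hcd

end Subgroup

namespace JustInfinite

variable {G : Type*} [Group G]

lemma finiteIndex (hji : JustInfinite G) {N : Subgroup G} [N.Normal] (hN : N ≠ ⊥) :
    N.FiniteIndex :=
  hji.2.2 N ‹_› hN

lemma virtuallyAbelian_of_normal_le_centralizer (hji : JustInfinite G) {S : Subgroup G}
    [S.Normal] (hS0 : S ≠ ⊥) (hS : S ≤ centralizer S) : VirtuallyAbelian G :=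
  ⟨S, hji.finiteIndex hS0, fun a b => Subtype.ext (mem_centralizer_iff.mp (hS b.2) a a.2)⟩

theorem virtuallyAbelian_of_le_centralizer (hji : JustInfinite G) {N M : Subgroup G} [N.Normal]
    [N.FiniteIndex] (hMN : M ≤ N) (hNM : N ≤ normalizer M) (hM : M ≤ centralizer M)
    (hM0 : M ≠ ⊥) : VirtuallyAbelian G := by
  obtain ⟨B, hB, hBM, hB0, hdisj⟩ :=
    exists_mem_conjugateInfs_pairwise_disjoint (finite_orbit_of_le_normalizer hNM) hM0
  have hcomm := pairwise_le_centralizer_orbit (hBM.trans hMN)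
    (le_normalizer_of_mem_conjugateInfs hNM hB) hdisj
  have hBab : B ≤ centralizer B := hBM.trans (hM.trans (centralizer_le hBM))
  exact hji.virtuallyAbelian_of_normal_le_centralizer
    (ne_bot_of_le_ne_bot hB0 (le_iSup_smul B)) (iSup_smul_le_centralizer hBab hcomm)

theorem iSupIndep_orbit (hji : JustInfinite G) (hnva : ¬ VirtuallyAbelian G) {N B : Subgroup G}
    [N.Normal] [N.FiniteIndex] (hBN : B ≤ N) (hNB : N ≤ normalizer B)
    (hcomm : (orbit (ConjAct G) B).Pairwise fun C D => C ≤ centralizer D) :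
    iSupIndep fun C : orbit (ConjAct G) B => (C : Subgroup G) := by
  intro C
  rw [disjoint_iff]
  by_contra hM0
  set W := ⨆ (D : orbit (ConjAct G) B) (_ : D ≠ C), (D : Subgroup G)
  have hW : W ≤ centralizer (C : Subgroup G) :=
    iSup₂_le fun D hD => hcomm D.2 C.2 (Subtype.coe_ne_coe.mpr hD)
  have hNW : N ≤ normalizer W :=
    le_normalizer_iSup fun D => le_normalizer_iSup fun _ => le_normalizer_of_mem_orbit hNB D.2
  have hNC : N ≤ normalizer (C : Subgroup G) := le_normalizer_of_mem_orbit hNB C.2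
  exact hnva (hji.virtuallyAbelian_of_le_centralizer (inf_le_left.trans (le_of_mem_orbit hBN C.2))
    ((le_inf hNC hNW).trans inf_normalizer_le_normalizer_inf)
    (inf_le_right.trans (hW.trans (centralizer_le inf_le_left))) hM0)

theorem isBasal_of_pairwise_disjoint (hji : JustInfinite G) (hnva : ¬ VirtuallyAbelian G)
    {N B : Subgroup G} [N.Normal] [N.FiniteIndex] (hBN : B ≤ N) (hNB : N ≤ normalizer B)
    (hB0 : B ≠ ⊥) (hdisj : (orbit (ConjAct G) B).Pairwise Disjoint) : IsBasal G B := by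
  have hcomm := pairwise_le_centralizer_orbit hBN hNB hdisj
  rw [IsBasal, conjugatesSet_eq_orbit, ← iSup_smul_eq_normalClosure]
  refine ⟨hB0, finite_orbit_of_le_normalizer hNB, fun C hC D hD hCD => ⟨disjoint_iff.mp
    (hdisj hC hD hCD), fun x hx y hy => (mem_centralizer_iff.mp (hcomm hC hD hCD hx) y hy).symm⟩,
    hji.iSupIndep_orbit hnva hBN hNB hcomm, iSup_range⟩

end JustInfinite

/-- In a just infinite group which is not virtually abelian, a nontrivial
subgroup K normal in its normal closure has finitely many conjugates, and
some intersection of conjugates of K is basal. -/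
theorem exists_basal_of_normal_in_normalClosure {G : Type*} [Group G]
    (hji : JustInfinite G) (hnva : ¬ VirtuallyAbelian G)
    (K : Subgroup G) (hK : K ≠ ⊥)
    (hnc : ∀ g ∈ Subgroup.normalClosure (K : Set G), ∀ k ∈ K, g * k * g⁻¹ ∈ K) :
    (conjugatesSet G K).Finite ∧
      ∃ T : Set (Subgroup G), T ⊆ conjugatesSet G K ∧ T.Nonempty ∧
        IsBasal G (sInf T) := by
  set N := normalClosure (K : Set G)
  have hKN : K ≤ N := le_normalClosure
  have hNK : N ≤ normalizer K := fun g hg => mem_normalizer_iff.mpr fun k =>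
    ⟨hnc g hg k, fun h => by simpa [mul_assoc] using hnc g⁻¹ (N.inv_mem hg) _ h⟩
  have : N.FiniteIndex := hji.finiteIndex (ne_bot_of_le_ne_bot hK hKN)
  have hfin := finite_orbit_of_le_normalizer hNK
  obtain ⟨B, hB, hBK, hB0, hdisj⟩ := exists_mem_conjugateInfs_pairwise_disjoint hfin hK
  have hNB := le_normalizer_of_mem_conjugateInfs hNK hB
  obtain ⟨T, ⟨hT, hTne⟩, rfl⟩ := hB
  rw [conjugatesSet_eq_orbit]
  exact ⟨hfin, T, hT, hTne, hji.isBasal_of_pairwise_disjoint hnva (hBK.trans hKN) hNB hB0 hdisj⟩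
end

section
/- Let G be a just infinite group that is not virtually abelian, let H ≤ G have finite index, and suppose there exists a basal subgroup B of G such that H acts intransitively by conjugation on the set of G-conjugates of B. Then H is not just infinite. -/
/-! If `H` is just infinite, take two `G`-conjugates `C`, `D` of `B` in different `H`-orbits and
let `K` be generated by the `H`-conjugates of `C`. Since `B` is infinite (a finite basal subgroup
would have finite normal closure), `K` is infinite, so `K ∩ H` is a nontrivial normal subgroup of
`H`; it therefore has finite index, and hence so does `K`. But `D` centralizes `K`, while in a just infinite group that is not
virtually abelian every finite index subgroup has trivial centralizer: otherwise the centralizer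
of its normal core is a nontrivial normal subgroup, and meets the core in a finite index abelian
subgroup. -/

namespace Subgroup

variable {G : Type*} [Group G]

theorem finite_iSup_of_pairwise_commute {ι : Type*} [Finite ι] {H : ι → Subgroup G}
    [∀ i, Finite (H i)]
    (hcomm : Pairwise fun i j => ∀ x y : G, x ∈ H i → y ∈ H j → Commute x y) :
    Finite ↥(⨆ i, H i) := by
  have := Fintype.ofFinite ι
  rw [← noncommPiCoprod_range (hcomm := hcomm)]
  exact (Set.finite_range _).to_subtype

theorem infinite_of_finiteIndex [Infinite G] (N : Subgroup G) [N.FiniteIndex] : Infinite N := by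
  by_contra hfin
  have : Finite G := (finite_iff_finite_and_finiteIndex (H := N)).mpr
    ⟨not_infinite_iff_finite.mp hfin, ‹_›⟩
  exact not_finite G

theorem finiteIndex_of_finiteIndex_subgroupOf_s11 {H K : Subgroup G} [H.FiniteIndex]
    [(K.subgroupOf H).FiniteIndex] : K.FiniteIndex := by
  rw [finiteIndex_iff, ← relIndex_top_right]
  refine relIndex_ne_zero_trans (K := H) FiniteIndex.index_ne_zero ?_
  rw [relIndex_top_right]
  exact FiniteIndex.index_ne_zero

theorem not_disjoint_of_infinite_of_finiteIndex {H K : Subgroup G} [Infinite K]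
    [H.FiniteIndex] : ¬ Disjoint K H := by
  intro hdisj
  have hindex : (H.subgroupOf K).index ≠ 0 := FiniteIndex.index_ne_zero
  rw [subgroupOf_eq_bot.mpr hdisj.symm, index_bot, Nat.card_eq_zero_of_infinite] at hindex
  exact hindex rfl

theorem map_conj_map_conj (g h : G) (B : Subgroup G) :
    (B.map (MulAut.conj h).toMonoidHom).map (MulAut.conj g).toMonoidHom
      = B.map (MulAut.conj (g * h)).toMonoidHom := by
  rw [map_map]
  congr 1
  ext x
  simp [MulAut.conj_apply, mul_assoc]

/-- The paper's `C^H`; unlike a normal closure in `H`, it need not lie in `H`. -/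
def conjSup (H C : Subgroup G) : Subgroup G :=
  ⨆ h : H, C.map (MulAut.conj (h : G)).toMonoidHom

theorem le_conjSup (H C : Subgroup G) : C ≤ conjSup H C :=
  le_iSup_of_le (1 : H) fun x hx => ⟨x, hx, by simp⟩

theorem normal_conjSup_subgroupOf (H C : Subgroup G) : ((conjSup H C).subgroupOf H).Normal := by
  refine ⟨fun x hx g => mem_subgroupOf.mpr ?_⟩
  suffices (conjSup H C).map (MulAut.conj (g : G)).toMonoidHom ≤ conjSup H C from
    this ⟨x, mem_subgroupOf.mp hx, rfl⟩
  rw [conjSup, map_iSup]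
  exact iSup_le fun h => (map_conj_map_conj (g : G) h C).trans_le (le_iSup_of_le (g * h) le_rfl)

end Subgroup

open Subgroup

section Basal

variable {G : Type*} [Group G] {B : Subgroup G}

theorem map_conj_mem_conjugatesSet {C : Subgroup G} (hC : C ∈ conjugatesSet G B) (g : G) :
    C.map (MulAut.conj g).toMonoidHom ∈ conjugatesSet G B := by
  obtain ⟨x, rfl⟩ := hC
  exact ⟨g * x, (map_conj_map_conj g x B).symm⟩

theorem nonempty_mulEquiv_of_mem_conjugatesSet {C : Subgroup G}
    (hC : C ∈ conjugatesSet G B) : Nonempty (B ≃* C) := by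
  obtain ⟨g, rfl⟩ := hC
  exact ⟨B.equivMapOfInjective _ (MulAut.conj g).injective⟩

theorem ne_bot_of_mem_conjugatesSet {C : Subgroup G} (hB : B ≠ ⊥)
    (hC : C ∈ conjugatesSet G B) : C ≠ ⊥ := by
  obtain ⟨g, rfl⟩ := hC
  exact (map_eq_bot_iff_of_injective B (MulAut.conj g).injective).not.mpr hB

theorem IsBasal.commute {C D : Subgroup G} (hB : IsBasal G B) (hC : C ∈ conjugatesSet G B)
    (hD : D ∈ conjugatesSet G B) (hCD : C ≠ D) : ∀ x ∈ C, ∀ y ∈ D, Commute x y :=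
  (hB.2.2.1 C hC D hD hCD).2

theorem IsBasal.finite_normalClosure [Finite B] (hB : IsBasal G B) :
    Finite (normalClosure (B : Set G)) := by
  have := hB.2.1.to_subtype
  have (C : conjugatesSet G B) : Finite C :=
    .of_equiv _ (nonempty_mulEquiv_of_mem_conjugatesSet C.2).some.toEquiv
  have hsup := hB.2.2.2.2
  rw [iSup_subtype'] at hsup
  rw [← hsup]
  exact finite_iSup_of_pairwise_commute
    fun C D hCD x y hx hy => hB.commute C.2 D.2 (Subtype.coe_injective.ne hCD) x hx y hy

theorem IsBasal.infinite [Infinite G] (hB : IsBasal G B)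
    (hfi : (normalClosure (B : Set G)).FiniteIndex) : Infinite B := by
  have := infinite_of_finiteIndex (normalClosure (B : Set G))
  by_contra hinf
  have := not_infinite_iff_finite.mp hinf
  have := hB.finite_normalClosure
  exact not_finite (normalClosure (B : Set G))

theorem IsBasal.le_centralizer_conjSup {H C D : Subgroup G} (hB : IsBasal G B)
    (hC : C ∈ conjugatesSet G B) (hD : D ∈ conjugatesSet G B)
    (hCD : ∀ h ∈ H, C.map (MulAut.conj h).toMonoidHom ≠ D) :
    D ≤ centralizer (conjSup H C : Set G) := by
  rw [le_centralizer_iff, conjSup, iSup_le_iff]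
  intro h x hx y hy
  exact (hB.commute (map_conj_mem_conjugatesSet hC h) hD (hCD h h.2) x hx y hy).eq.symm

end Basal

section JustInfinite

variable {G : Type*} [Group G]

theorem VirtuallyAbelian.of_finiteIndex_centralizer (N : Subgroup G) [N.FiniteIndex]
    [(centralizer (N : Set G)).FiniteIndex] : VirtuallyAbelian G :=
  ⟨N ⊓ centralizer N, inferInstance, fun a b => Subtype.ext (mem_centralizer_iff.mp b.2.2 _ a.2.1)⟩

theorem centralizer_eq_bot_of_finiteIndex
    (hG : ∀ N : Subgroup G, N.Normal → N ≠ ⊥ → N.FiniteIndex) (hnva : ¬ VirtuallyAbelian G)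
    (K : Subgroup G) [K.FiniteIndex] : centralizer (K : Set G) = ⊥ := by
  by_contra hK
  have := hG _ inferInstance (ne_bot_of_le_ne_bot hK (centralizer_le K.normalCore_le))
  exact hnva (.of_finiteIndex_centralizer K.normalCore)

end JustInfinite

/-- If H is a finite index subgroup of a just infinite, non virtually abelian
group G acting intransitively on the conjugates of some basal subgroup B,
then H is not just infinite. -/
theorem not_justInfinite_of_intransitive_on_basal {G : Type*} [Group G]
    (hji : JustInfinite G) (hnva : ¬ VirtuallyAbelian G)
    (H : Subgroup G) (hH : H.FiniteIndex)
    (B : Subgroup G) (hB : IsBasal G B)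
    (hintrans : ¬ (∀ C ∈ conjugatesSet G B, ∀ D ∈ conjugatesSet G B,
        ∃ h ∈ H, C.map (MulAut.conj h).toMonoidHom = D)) :
    ¬ JustInfinite H := by
  obtain ⟨hG_infinite, -, hG⟩ := hji
  push Not at hintrans
  obtain ⟨C, hC, D, hD, hCD⟩ := hintrans
  rintro ⟨-, -, hH_ji⟩
  have := hB.infinite (hG _ normalClosure_normal
    (ne_bot_of_le_ne_bot hB.1 fun _ hx => subset_normalClosure hx))
  have : Infinite C := .of_injective _ (nonempty_mulEquiv_of_mem_conjugatesSet hC).some.injective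
  have : Infinite (conjSup H C) := .of_injective _ (inclusion_injective (le_conjSup H C))
  have := hH_ji _ (normal_conjSup_subgroupOf H C)
    (subgroupOf_eq_bot.not.mpr not_disjoint_of_infinite_of_finiteIndex)
  have := finiteIndex_of_finiteIndex_subgroupOf_s11 (H := H) (K := conjSup H C)
  exact ne_bot_of_mem_conjugatesSet hB.1 hD <| le_bot_iff.mp <|
    (hB.le_centralizer_conjSup hC hD hCD).trans (centralizer_eq_bot_of_finiteIndex hG hnva _).le
end

section
/- Let G be a finite group acting faithfully and primitively on a finite set Ω, and let H be a normal subgroup of G. Then the Frattini subgroup Φ(H) of H is trivial. -/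
/-!
The image `N` of `Φ(H)` in `G` is normal in `G`, since `Φ(H)` is characteristic in `H`. If `N`
fixes every point it is trivial by faithfulness. Otherwise `N` lies outside some stabilizer
`G_ω`, so `N G_ω = G` by maximality, and then `H = Φ(H) (H ∩ G_ω)` by Dedekind's law. As `Φ(H)`
consists of non-generators, `H ≤ G_ω`, and a normal subgroup fixing one point of a transitive
faithful action is trivial.
-/

open Subgroup MulAction

section Stabilizer

variable {G Ω : Type*} [Group G] [MulAction G Ω]

theorem MulAction.eq_bot_of_forall_le_stabilizer [FaithfulSMul G Ω] {K : Subgroup G}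
    (hK : ∀ a : Ω, K ≤ stabilizer G a) : K = ⊥ :=
  (eq_bot_iff_forall K).2 fun _ hg => eq_of_smul_eq_smul fun a => by rw [one_smul]; exact hK a hg

theorem Subgroup.Normal.le_stabilizer_smul {K : Subgroup G} (hK : K.Normal) {a : Ω}
    (hKa : K ≤ stabilizer G a) (g : G) : K ≤ stabilizer G (g • a) := by
  intro k hk
  have hconj : g⁻¹ * k * g ∈ stabilizer G a := hKa (by simpa using hK.conj_mem k hk g⁻¹)
  rw [mem_stabilizer_iff] at hconj ⊢
  calc k • g • a = g • (g⁻¹ * k * g) • a := by simp [mul_smul]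
    _ = g • a := by rw [hconj]

theorem Subgroup.Normal.eq_bot_of_le_stabilizer [IsPretransitive G Ω] [FaithfulSMul G Ω]
    {K : Subgroup G} (hK : K.Normal) {a : Ω} (hKa : K ≤ stabilizer G a) : K = ⊥ :=
  eq_bot_of_forall_le_stabilizer fun b => by
    obtain ⟨g, rfl⟩ := MulAction.exists_smul_eq G a b
    exact hK.le_stabilizer_smul hKa g

end Stabilizer

theorem Subgroup.le_of_map_frattini_sup_eq_top {G : Type*} [Group G] {H K : Subgroup G}
    [IsCoatomic (Subgroup H)] [H.Normal] (hsup : (frattini H).map H.subtype ⊔ K = ⊤) :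
    H ≤ K := by
  rw [← subgroupOf_eq_top]
  refine frattini_nongenerating (eq_top_iff.2 fun h _ => ?_)
  have hmem : (h : G) ∈ ((frattini H).map H.subtype ⊔ K : Subgroup G) := hsup ▸ mem_top _
  rw [← SetLike.mem_coe, normal_mul] at hmem
  obtain ⟨_, ⟨f, hf, rfl⟩, k, hk, hfk⟩ := hmem
  have hkH : k ∈ H := by simpa [← hfk] using H.mul_mem (inv_mem f.2) h.2
  have : h = f * ⟨k, hkH⟩ := Subtype.ext hfk.symm
  exact this ▸ mul_mem (mem_sup_right hf) (mem_sup_left hk)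

theorem frattini_eq_bot_of_primitive_general {G Ω : Type*} [Group G] [Finite G]
    [MulAction G Ω] [FaithfulSMul G Ω]
    (htrans : MulAction.IsPretransitive G Ω)
    (hprim : ∀ ω : Ω, IsCoatom (MulAction.stabilizer G ω))
    (H : Subgroup G) (hH : H.Normal) :
    sInf {M : Subgroup H | IsCoatom M} = ⊥ := by
  rw [sInf_eq_iInf]
  change frattini H = ⊥
  rw [← map_eq_bot_iff_of_injective _ H.subtype_injective]
  by_cases hfix : ∀ ω : Ω, (frattini H).map H.subtype ≤ stabilizer G ω
  · exact eq_bot_of_forall_le_stabilizer hfix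
  obtain ⟨ω, hω⟩ := not_forall.1 hfix
  have hsup := (hprim ω).2 _ (right_lt_sup.mpr hω)
  have hHbot : H = ⊥ := hH.eq_bot_of_le_stabilizer (le_of_map_frattini_sup_eq_top hsup)
  exact le_bot_iff.1 (hHbot ▸ map_subtype_le _)

/-- If a finite group G acts faithfully and primitively on a finite set Ω,
then every normal subgroup H of G has trivial Frattini subgroup. -/
theorem frattini_eq_bot_of_primitive {G Ω : Type*} [Group G] [Finite G]
    [Finite Ω] [MulAction G Ω] [FaithfulSMul G Ω]
    (htrans : MulAction.IsPretransitive G Ω)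
    (hprim : ∀ ω : Ω, IsCoatom (MulAction.stabilizer G ω))
    (H : Subgroup G) (hH : H.Normal) :
    sInf {M : Subgroup H | IsCoatom M} = ⊥ :=
  frattini_eq_bot_of_primitive_general htrans hprim H hH
end
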